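/- arXiv:1907.03277 — 2 statements merged into one kernel-verified Lean document; each statement's English description precedes it below -/
import Mathlib

section
/- If Ω ⊂ ℙ(ℝ^d) is a properly convex domain, 𝒟 ⊆ Ω is a non-empty closed convex set, and r ≥ 0, then the open r-neighborhood 𝒩_r(𝒟) := {x ∈ Ω : H_Ω(x, 𝒟) < r} (where H_Ω(x,𝒟) = inf_{y∈𝒟} H_Ω(x,y)) is a convex subset of Ω. -/
open scoped LinearAlgebra.Projectivization Pointwise
open Projectivization Matrix

namespace CCProj

abbrev PSp (d : ℕ) := ℙ ℝ (Fin d → ℝ)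

noncomputable instance (d : ℕ) : TopologicalSpace (PSp d) :=
  inferInstanceAs (TopologicalSpace (Quotient (projectivizationSetoid ℝ (Fin d → ℝ))))

variable {d : ℕ}

noncomputable def glEquivHom (d : ℕ) :
    GL (Fin d) ℝ →* ((Fin d → ℝ) ≃ₗ[ℝ] (Fin d → ℝ)) :=
  (Matrix.GeneralLinearGroup.toLin.trans
    (LinearMap.GeneralLinearGroup.generalLinearEquiv ℝ (Fin d → ℝ))).toMonoidHom

noncomputable def projPerm (e : (Fin d → ℝ) ≃ₗ[ℝ] (Fin d → ℝ)) : Equiv.Perm (PSp d) where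
  toFun := Projectivization.map e.toLinearMap e.injective
  invFun := Projectivization.map e.symm.toLinearMap e.symm.injective
  left_inv x := by
    induction x using Projectivization.ind with
    | h v hv => simp [Projectivization.map_mk]
  right_inv x := by
    induction x using Projectivization.ind with
    | h v hv => simp [Projectivization.map_mk]

noncomputable def glToPerm (d : ℕ) : GL (Fin d) ℝ →* Equiv.Perm (PSp d) where
  toFun g := projPerm (glEquivHom d g)
  map_one' := by
    ext x
    induction x using Projectivization.ind with
    | h v hv => simp [projPerm, Projectivization.map_mk]
  map_mul' g h := by
    ext x
    induction x using Projectivization.ind with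
    | h v hv => simp [projPerm, Projectivization.map_mk]

abbrev PGL (d : ℕ) := GL (Fin d) ℝ ⧸ (glToPerm d).ker

noncomputable def pglPerm (d : ℕ) : PGL d →* Equiv.Perm (PSp d) :=
  QuotientGroup.lift _ (glToPerm d) (fun _ hg => hg)

noncomputable instance : MulAction (PGL d) (PSp d) :=
  MulAction.compHom _ (pglPerm d)

/-! ### Convexity in projective space -/

/-- The affine chart associated to a linear functional `f`: a projective point `x` with
`f(x.rep) ≠ 0` is sent to the unique representative `v` of `x` with `f v = 1`. -/
noncomputable def chartMap (f : (Fin d → ℝ) →ₗ[ℝ] ℝ) (x : PSp d) : Fin d → ℝ :=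
  (f x.rep)⁻¹ • x.rep

/-- A set `C ⊆ ℙ(ℝ^d)` is convex if it lies in some affine chart and is convex there. -/
def IsConvexSet (C : Set (PSp d)) : Prop :=
  ∃ f : (Fin d → ℝ) →ₗ[ℝ] ℝ, (∀ x ∈ C, f x.rep ≠ 0) ∧ Convex ℝ (chartMap f '' C)

/-- A set `C ⊆ ℙ(ℝ^d)` is properly convex if it lies in some affine chart and is
convex and bounded there. -/
def IsProperlyConvexSet (C : Set (PSp d)) : Prop :=
  ∃ f : (Fin d → ℝ) →ₗ[ℝ] ℝ, (∀ x ∈ C, f x.rep ≠ 0) ∧ Convex ℝ (chartMap f '' C) ∧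
    Bornology.IsBounded (chartMap f '' C)

/-- A properly convex domain: a non-empty open properly convex subset of `ℙ(ℝ^d)`. -/
def IsProperlyConvexDomain (Ω : Set (PSp d)) : Prop :=
  IsOpen Ω ∧ Ω.Nonempty ∧ IsProperlyConvexSet Ω

/-- The projectivization of a linear subspace `W ⊆ ℝ^d`, as a subset of `ℙ(ℝ^d)`. -/
def Pb (W : Submodule ℝ (Fin d → ℝ)) : Set (PSp d) := {x | x.rep ∈ W}

/-- The linear span of (the lines representing) a subset of `ℙ(ℝ^d)`. -/
def projSpan (C : Set (PSp d)) : Submodule ℝ (Fin d → ℝ) :=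
  Submodule.span ℝ {v | ∃ x ∈ C, v = Projectivization.rep x}

/-- `C` is open in its span, i.e. equal to its relative interior. -/
def OpenInSpan (C : Set (PSp d)) : Prop :=
  ∃ U : Set (PSp d), IsOpen U ∧ C = U ∩ Pb (projSpan C)

/-! ### The Hilbert metric -/

/-- The set of "cross-ratio" values used to define the Hilbert distance on a properly
convex set `C` which is open in its span: for linear functionals `f, g` which do not
vanish on (the cone over) `C`, one takes `f(ξ)g(η)/(f(η)g(ξ))` where `ξ, η` are
representatives of `x, y`.  (This quantity is independent of the choice of
representatives.)  For such a set `C`, the supremum of this set is exactly the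
cross-ratio `[a,x,y,b]` of the classical definition of the Hilbert distance, where
`a, x, y, b` are aligned in this order on the projective line through `x` and `y`,
with `a, b ∈ ∂C`. -/
def crossSet (C : Set (PSp d)) (x y : PSp d) : Set ℝ :=
  {r | ∃ f g : (Fin d → ℝ) →ₗ[ℝ] ℝ, (∀ z ∈ C, f z.rep ≠ 0) ∧ (∀ z ∈ C, g z.rep ≠ 0) ∧
      r = (f x.rep * g y.rep) / (f y.rep * g x.rep)}

/-- The Hilbert distance on a properly convex set `C ⊆ ℙ(ℝ^d)` which is open in its
span: `H_C(x,y) = (1/2) log [a,x,y,b]`. -/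
noncomputable def hilbertDist (C : Set (PSp d)) (x y : PSp d) : ℝ :=
  (1 / 2) * Real.log (sSup (crossSet C x y))

/-- The distance from a point to a set, for the Hilbert metric on `C`. -/
noncomputable def hilbertDistToSet (C : Set (PSp d)) (x : PSp d) (D : Set (PSp d)) : ℝ :=
  sInf {s | ∃ y ∈ D, s = hilbertDist C x y}

/-- The Hausdorff distance between two subsets of `C`, for the Hilbert metric on `C`. -/
noncomputable def hilbertHausDist (C : Set (PSp d)) (A B : Set (PSp d)) : ℝ :=
  max (sSup {r | ∃ a ∈ A, r = hilbertDistToSet C a B})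
      (sSup {r | ∃ b ∈ B, r = hilbertDistToSet C b A})

/-- The minimal translation length `τ_C(g) = inf_{x ∈ C} H_C(x, gx)`. -/
noncomputable def transLength (C : Set (PSp d)) (g : PGL d) : ℝ :=
  sInf ((fun x => hilbertDist C x (g • x)) '' C)

/-- The minimal translation set `Min(g) = {x ∈ Ω : H_Ω(x,gx) = τ_Ω(g)}`. -/
noncomputable def minSet (Ω : Set (PSp d)) (g : PGL d) : Set (PSp d) :=
  {x ∈ Ω | hilbertDist Ω x (g • x) = transLength Ω g}

/-! ### Automorphisms, cocompact actions -/

/-- The automorphism group `Aut(Ω) = {g ∈ PGL(d,ℝ) : gΩ = Ω}`. -/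
noncomputable def aut (Ω : Set (PSp d)) : Subgroup (PGL d) := MulAction.stabilizer (PGL d) Ω

/-- A collection `G` of elements of `PGL(d,ℝ)` acts co-compactly on `X ⊆ ℙ(ℝ^d)` if
there is a compact `K ⊆ X` with `⋃_{g ∈ G} gK = X`. -/
def ActsCocompactlyOn (G : Set (PGL d)) (X : Set (PSp d)) : Prop :=
  ∃ K : Set (PSp d), K ⊆ X ∧ IsCompact K ∧ (⋃ g ∈ G, g • K) = X

/-- A naive convex co-compact triple `(Ω, 𝒞, Λ)`. -/
structure IsNCCTriple (Ω 𝒞 : Set (PSp d)) (Λ : Subgroup (PGL d)) : Prop where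
  dom : IsProperlyConvexDomain Ω
  lambda_le : Λ ≤ aut Ω
  lambda_inf : (Λ : Set (PGL d)).Infinite
  lambda_disc : DiscreteTopology Λ
  C_nonempty : 𝒞.Nonempty
  C_sub : 𝒞 ⊆ Ω
  C_convex : IsConvexSet 𝒞
  C_closed : closure 𝒞 ∩ Ω ⊆ 𝒞   -- `𝒞` is closed in `Ω`
  C_inv : ∀ γ ∈ Λ, γ • 𝒞 = 𝒞
  C_cocompact : ActsCocompactlyOn (Λ : Set (PGL d)) 𝒞

/-! ### Segments, convex hulls and faces -/

/-- The smallest convex subset of `cl(C)` containing `X` (the convex hull of `X`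
relative to `C`). -/
def convHull (C : Set (PSp d)) (X : Set (PSp d)) : Set (PSp d) :=
  ⋂₀ {D | IsConvexSet D ∧ D ⊆ closure C ∧ X ⊆ D}

/-- The closed segment `[x,y]` joining two points of `cl(C)` inside `cl(C)`. -/
def closedSeg (C : Set (PSp d)) (x y : PSp d) : Set (PSp d) := convHull C {x, y}

/-- The open segment `(x,y) = [x,y] \ {x,y}`. -/
def openSeg (C : Set (PSp d)) (x y : PSp d) : Set (PSp d) := closedSeg C x y \ {x, y}

/-- The open segment with endpoints `[u]` and `[v]` (for `u, v` linearly independent):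
the projective points `[a•u + b•v]` with `a, b > 0`. -/
def openSegV (u v : Fin d → ℝ) : Set (PSp d) :=
  {z | ∃ a b : ℝ, 0 < a ∧ 0 < b ∧ ∃ h : a • u + b • v ≠ 0, z = Projectivization.mk ℝ (a • u + b • v) h}

/-- The projective line through `[u]` and `[v]`. -/
def projLine (u v : Fin d → ℝ) : Set (PSp d) :=
  {z | ∃ a b : ℝ, ∃ h : a • u + b • v ≠ 0, z = Projectivization.mk ℝ (a • u + b • v) h}

/-- The open face `F_Ω(x)` of a point `x ∈ cl(Ω)`. -/
def face (Ω : Set (PSp d)) (x : PSp d) : Set (PSp d) :=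
  insert x {y ∈ closure Ω | ∃ u v : Fin d → ℝ,
    openSegV u v ⊆ closure Ω ∧ x ∈ openSegV u v ∧ y ∈ openSegV u v}

/-- `A` is properly embedded in `B` if `A ⊆ B` and the inclusion is a proper map. -/
def ProperlyEmbedded (A B : Set (PSp d)) : Prop :=
  ∃ h : A ⊆ B, IsProperMap (Set.inclusion h)

/-! ### Simplices -/

/-- The standard open `(k-1)`-dimensional simplex
`{[x₁ : ⋯ : x_k : 0 : ⋯ : 0] : x₁ > 0, …, x_k > 0} ⊆ ℙ(ℝ^d)`. -/
def stdSimplex (d k : ℕ) : Set (PSp d) :=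
  {x | ∃ (v : Fin d → ℝ) (h : v ≠ 0), x = Projectivization.mk ℝ v h ∧
    ∀ i : Fin d, (((i : ℕ) < k → 0 < v i) ∧ (k ≤ (i : ℕ) → v i = 0))}

/-- The `i`-th standard basis point `[e_i] ∈ ℙ(ℝ^d)`. -/
noncomputable def basisPt (d : ℕ) (i : Fin d) : PSp d :=
  Projectivization.mk ℝ (Pi.single i 1) (by
    intro h
    have := congrFun h i
    simp at this)

/-- The absolute values of the complex eigenvalues of a real matrix. -/
noncomputable def eigAbs (M : Matrix (Fin d) (Fin d) ℝ) : Set ℝ :=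
  (fun z : ℂ => ‖z‖) '' spectrum ℂ (M.map Complex.ofReal)

/-- The operator norm on `End(ℝ^d)` associated to the standard Euclidean norm. -/
noncomputable def eucOpNorm (M : Matrix (Fin d) (Fin d) ℝ) : ℝ :=
  ‖Matrix.toEuclideanCLM (𝕜 := ℝ) M‖

/-- The image of a subset of `ℙ(ℝ^d)` under (the projectivization of) an endomorphism
`T` of `ℝ^d`. -/
def projImage (T : Matrix (Fin d) (Fin d) ℝ) (A : Set (PSp d)) : Set (PSp d) :=
  {y | ∃ (v : Fin d → ℝ) (hv : v ≠ 0), Projectivization.mk ℝ v hv ∈ A ∧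
    ∃ hTv : T *ᵥ v ≠ 0, y = Projectivization.mk ℝ (T *ᵥ v) hTv}

/-!
In an affine chart `f₀ = 1` containing `Ω`, `exp (2 H_Ω(x, y))` is the supremum of
`f(x) g(y) / (f(y) g(x))` over linear functionals `f, g` positive on `Ω`. Hence a bound
`H_Ω(x, y) ≤ ½ log R` gives a rescaling `c y` of `y` with `c y ≤ x ≤ R c y` in the order dual
to these functionals, and conversely. Such two-sided bounds add up: from `c₁ y₁ ≤ x ≤ R c₁ y₁`
and `c₂ y₂ ≤ z ≤ R c₂ y₂` we get the same bound between `a x + b z` and `a c₁ y₁ + b c₂ y₂`,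
which represents a point of the segment `[y₁, y₂] ⊆ 𝒟`. So `H_Ω(·, 𝒟)` is quasi-convex along
segments of `Ω`, and its sublevel sets are convex.
-/

open Set

section DualOrder

variable {E : Type*} [AddCommGroup E] [Module ℝ E]

lemma _root_.Convex.pos_or_neg_of_ne_zero {K : Set E} (hK : Convex ℝ K) {f : E →ₗ[ℝ] ℝ}
    (hf : ∀ v ∈ K, f v ≠ 0) : (∀ v ∈ K, 0 < f v) ∨ (∀ v ∈ K, f v < 0) := by
  by_contra! ⟨⟨u, hu, hfu⟩, ⟨v, hv, hfv⟩⟩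
  obtain ⟨w, hw, hfw⟩ := (hK.linear_image f).ordConnected.out (mem_image_of_mem f hu)
    (mem_image_of_mem f hv) ⟨hfu, hfv⟩
  exact hf w hw hfw

lemma _root_.Convex.mul_pos_of_ne_zero {K : Set E} (hK : Convex ℝ K) {f : E →ₗ[ℝ] ℝ}
    (hf : ∀ v ∈ K, f v ≠ 0) {u v : E} (hu : u ∈ K) (hv : v ∈ K) : 0 < f u * f v := by
  rcases hK.pos_or_neg_of_ne_zero hf with h | h
  · exact mul_pos (h u hu) (h v hv)
  · exact mul_pos_of_neg_of_neg (h u hu) (h v hv)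

/-- `v ↦ (f v)⁻¹ • v` is the central projection onto the hyperplane `f = 1`, i.e. a change of
affine chart. -/
lemma _root_.Convex.image_inv_smul {K : Set E} (hK : Convex ℝ K) {f : E →ₗ[ℝ] ℝ}
    (hf : ∀ v ∈ K, f v ≠ 0) : Convex ℝ ((fun v => (f v)⁻¹ • v) '' K) := by
  rintro _ ⟨u, hu, rfl⟩ _ ⟨v, hv, rfl⟩ a b ha hb hab
  have hfu := hf u hu
  have hfv := hf v hv
  set α := a / f u
  set β := b / f v
  have hαβ : 0 ≤ α * β := by
    have : α * β = a * b / (f u * f v) := by simp only [α, β]; field_simp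
    rw [this]
    exact div_nonneg (mul_nonneg ha hb) (hK.mul_pos_of_ne_zero hf hu hv).le
  have hsum : α + β ≠ 0 := by
    intro h
    have hβ : β = 0 := by nlinarith [sq_nonneg β]
    have hα : α = 0 := by linarith
    simp only [α, β, div_eq_zero_iff, hfu, hfv, or_false] at hα hβ
    linarith
  have weight_nonneg : ∀ γ δ : ℝ, 0 ≤ γ * δ → γ + δ ≠ 0 → 0 ≤ γ / (γ + δ) := fun γ δ h hs => by
    have : γ / (γ + δ) = (γ ^ 2 + γ * δ) / (γ + δ) ^ 2 := by field_simp
    rw [this]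
    exact div_nonneg (by positivity) (sq_nonneg _)
  have hq : (α / (α + β)) • u + (β / (α + β)) • v ∈ K := hK hu hv (weight_nonneg α β hαβ hsum)
    (add_comm α β ▸ weight_nonneg β α (by linarith) (by rwa [add_comm])) (by field_simp)
  refine ⟨_, hq, ?_⟩
  dsimp only
  have hfq : f ((α / (α + β)) • u + (β / (α + β)) • v) = (α + β)⁻¹ := by
    have hαf : α * f u = a := div_mul_cancel₀ a hfu
    have hβf : β * f v = b := div_mul_cancel₀ b hfv
    simp only [map_add, map_smul, smul_eq_mul]
    field_simp
    linear_combination hαf + hβf + hab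
  rw [hfq, inv_inv, smul_add, smul_smul, smul_smul, mul_div_cancel₀ _ hsum, mul_div_cancel₀ _ hsum]
  simp only [α, β, smul_smul, div_eq_mul_inv]

/-- `v ≤ u ≤ R • v` in the order on `E` dual to the family of functionals `P`. -/
def DualSandwich (P : Set (E →ₗ[ℝ] ℝ)) (R : ℝ) (u v : E) : Prop :=
  ∀ f ∈ P, f v ≤ f u ∧ f u ≤ R * f v

def posDual (K : Set E) : Set (E →ₗ[ℝ] ℝ) := {f | ∀ v ∈ K, 0 < f v}

lemma _root_.Convex.exists_mem_posDual_eq_smul {K : Set E} (hK : Convex ℝ K) {f : E →ₗ[ℝ] ℝ}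
    (hf : ∀ v ∈ K, f v ≠ 0) : ∃ f' ∈ posDual K, ∃ ε : ℝ, ε ≠ 0 ∧ f = ε • f' := by
  rcases hK.pos_or_neg_of_ne_zero hf with h | h
  · exact ⟨f, h, 1, one_ne_zero, (one_smul ℝ f).symm⟩
  · exact ⟨-f, fun v hv => neg_pos.2 (h v hv), -1, by norm_num, by simp⟩

noncomputable def crossRatio (f g : E →ₗ[ℝ] ℝ) (u v : E) : ℝ := f u * g v / (f v * g u)

lemma crossRatio_smul_smul (f g : E →ₗ[ℝ] ℝ) (u v : E) {a b : ℝ} (ha : a ≠ 0) (hb : b ≠ 0) :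
    crossRatio f g (a • u) (b • v) = crossRatio f g u v := by
  simp only [crossRatio, map_smul, smul_eq_mul]
  rw [mul_mul_mul_comm, mul_mul_mul_comm _ (f v), mul_comm b a,
    mul_div_mul_left _ _ (mul_ne_zero ha hb)]

lemma smul_crossRatio_smul (f g : E →ₗ[ℝ] ℝ) (u v : E) {a b : ℝ} (ha : a ≠ 0) (hb : b ≠ 0) :
    crossRatio (a • f) (b • g) u v = crossRatio f g u v := by
  simp only [crossRatio, LinearMap.smul_apply, smul_eq_mul]
  rw [mul_mul_mul_comm, mul_mul_mul_comm _ (f v), mul_div_mul_left _ _ (mul_ne_zero ha hb)]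

variable {P : Set (E →ₗ[ℝ] ℝ)} {R : ℝ}

lemma DualSandwich.smul_add_smul {u₁ u₂ v₁ v₂ : E} (h₁ : DualSandwich P R u₁ v₁)
    (h₂ : DualSandwich P R u₂ v₂) {a b : ℝ} (ha : 0 ≤ a) (hb : 0 ≤ b) :
    DualSandwich P R (a • u₁ + b • u₂) (a • v₁ + b • v₂) := by
  intro f hf
  obtain ⟨h₁l, h₁r⟩ := h₁ f hf
  obtain ⟨h₂l, h₂r⟩ := h₂ f hf
  simp only [map_add, map_smul, smul_eq_mul]
  constructor <;> nlinarith [mul_le_mul_of_nonneg_left h₁l ha, mul_le_mul_of_nonneg_left h₂l hb,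
    mul_le_mul_of_nonneg_left h₁r ha, mul_le_mul_of_nonneg_left h₂r hb]

lemma DualSandwich.crossRatio_le {u v : E} {c : ℝ} (h : DualSandwich P R u (c • v))
    (hc : 0 < c) (hv : ∀ f ∈ P, 0 < f v) {f g : E →ₗ[ℝ] ℝ} (hf : f ∈ P) (hg : g ∈ P) :
    crossRatio f g u v ≤ R := by
  obtain ⟨hcfv, hfu⟩ := h f hf
  obtain ⟨hgu, -⟩ := h g hg
  simp only [map_smul, smul_eq_mul] at hcfv hfu hgu
  have hfv := hv f hf
  have hgv := hv g hg
  have hgu_pos : 0 < g u := lt_of_lt_of_le (mul_pos hc hgv) hgu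
  have hR : 0 < R := by nlinarith [mul_pos hc hfv]
  rw [crossRatio, div_le_iff₀ (mul_pos hfv hgu_pos)]
  calc f u * g v ≤ R * (c * f v) * g v := mul_le_mul_of_nonneg_right hfu hgv.le
    _ = R * f v * (c * g v) := by ring
    _ ≤ R * f v * g u := mul_le_mul_of_nonneg_left hgu ?_
    _ = R * (f v * g u) := by ring
  positivity

/-- The scale `c` is the infimum of `g u / g v` over `g ∈ P`. -/
lemma exists_dualSandwich (hP : P.Nonempty) {u v : E} (hu : ∀ f ∈ P, 0 < f u)
    (hv : ∀ f ∈ P, 0 < f v) (hR : 0 < R) (h : ∀ f ∈ P, ∀ g ∈ P, crossRatio f g u v ≤ R) :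
    ∃ c : ℝ, 0 < c ∧ DualSandwich P R u (c • v) := by
  set S := (fun g => g u / g v) '' P
  have hS : S.Nonempty := hP.image _
  have hSbdd : BddBelow S := ⟨0, by
    rintro _ ⟨g, hg, rfl⟩
    exact div_nonneg (hu g hg).le (hv g hg).le⟩
  have hlower : ∀ f ∈ P, f u / (R * f v) ≤ sInf S := fun f hf => by
    refine le_csInf hS ?_
    rintro _ ⟨g, hg, rfl⟩
    rw [div_le_div_iff₀ (mul_pos hR (hv f hf)) (hv g hg)]
    have := h f hf g hg
    rw [crossRatio, div_le_iff₀ (mul_pos (hv f hf) (hu g hg))] at this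
    linarith
  obtain ⟨f₀, hf₀⟩ := hP
  refine ⟨sInf S, lt_of_lt_of_le (div_pos (hu f₀ hf₀) (mul_pos hR (hv f₀ hf₀))) (hlower f₀ hf₀),
    fun f hf => ?_⟩
  simp only [map_smul, smul_eq_mul]
  have hfv := hv f hf
  constructor
  · have := csInf_le hSbdd (mem_image_of_mem _ hf)
    rwa [le_div_iff₀ hfv] at this
  · have := hlower f hf
    rw [div_le_iff₀ (mul_pos hR hfv)] at this
    linarith

end DualOrder

section Chart

variable {f₀ f₁ : (Fin d → ℝ) →ₗ[ℝ] ℝ} {x : PSp d}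

lemma rep_eq_smul_chartMap (h : f₀ x.rep ≠ 0) : x.rep = f₀ x.rep • chartMap f₀ x :=
  (smul_inv_smul₀ h _).symm

lemma apply_chartMap_self (h : f₀ x.rep ≠ 0) : f₀ (chartMap f₀ x) = 1 := by
  rw [chartMap, map_smul, smul_eq_mul, inv_mul_cancel₀ h]

lemma apply_rep_eq_mul (h : f₀ x.rep ≠ 0) (f : (Fin d → ℝ) →ₗ[ℝ] ℝ) :
    f x.rep = f₀ x.rep * f (chartMap f₀ x) := by
  conv_lhs => rw [rep_eq_smul_chartMap h]
  rw [map_smul, smul_eq_mul]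

lemma chartMap_ne_zero (h : f₀ x.rep ≠ 0) : chartMap f₀ x ≠ 0 := fun h0 => by
  simpa [h0] using apply_chartMap_self h

lemma mk_chartMap (h : chartMap f₀ x ≠ 0) : Projectivization.mk ℝ (chartMap f₀ x) h = x := by
  conv_rhs => rw [← mk_rep x]
  exact (mk_eq_mk_iff' ℝ _ _ _ _).2 ⟨(f₀ x.rep)⁻¹, rfl⟩

lemma chartMap_mk {v : Fin d → ℝ} (hv : v ≠ 0) (h : f₀ v = 1) :
    chartMap f₀ (Projectivization.mk ℝ v hv) = v := by
  obtain ⟨a, ha⟩ := Projectivization.exists_smul_eq_mk_rep ℝ v hv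
  rw [chartMap, ← ha, Units.smul_def, map_smul, smul_eq_mul, h, mul_one, inv_smul_smul₀ a.ne_zero]

lemma chartMap_eq_inv_smul_chartMap (h : f₁ x.rep ≠ 0) :
    chartMap f₀ x = (f₀ (chartMap f₁ x))⁻¹ • chartMap f₁ x := by
  have e : (f₁ x.rep)⁻¹ • x.rep = chartMap f₁ x := rfl
  rw [chartMap, apply_rep_eq_mul h f₀, mul_inv, mul_comm, mul_smul, e]

lemma IsConvexSet.convex_image_chartMap {D : Set (PSp d)} (hD : IsConvexSet D)
    (hf₀ : ∀ x ∈ D, f₀ x.rep ≠ 0) : Convex ℝ (chartMap f₀ '' D) := by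
  obtain ⟨f₁, hf₁, hconv⟩ := hD
  have himage : chartMap f₀ '' D = (fun v => (f₀ v)⁻¹ • v) '' (chartMap f₁ '' D) := by
    rw [image_image]
    exact image_congr fun x hx => chartMap_eq_inv_smul_chartMap (hf₁ x hx)
  rw [himage]
  refine hconv.image_inv_smul ?_
  rintro _ ⟨x, hx, rfl⟩ h
  exact hf₀ x hx (by rw [apply_rep_eq_mul (hf₁ x hx), h, mul_zero])

end Chart

lemma isOpen_setOf_mk_mem {U : Set (PSp d)} (hU : IsOpen U) :
    IsOpen {v : Fin d → ℝ | ∃ hv : v ≠ 0, Projectivization.mk ℝ v hv ∈ U} := by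
  have h : IsOpen (Projectivization.mk' ℝ ⁻¹' U : Set {v : Fin d → ℝ // v ≠ 0}) :=
    hU.preimage continuous_quotient_mk'
  convert isOpen_compl_singleton.isOpenMap_subtype_val _ h
  ext v
  constructor
  · rintro ⟨hv, h⟩
    exact ⟨⟨v, hv⟩, h, rfl⟩
  · rintro ⟨⟨w, hw⟩, h, rfl⟩
    exact ⟨hw, h⟩

section HilbertMetric

variable {Ω : Set (PSp d)} {f₀ : (Fin d → ℝ) →ₗ[ℝ] ℝ}

lemma mem_posDual_self (hch : ∀ z ∈ Ω, f₀ z.rep ≠ 0) : f₀ ∈ posDual (chartMap f₀ '' Ω) := by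
  rintro _ ⟨z, hz, rfl⟩
  rw [apply_chartMap_self (hch z hz)]
  exact one_pos

lemma crossSet_eq (hch : ∀ z ∈ Ω, f₀ z.rep ≠ 0) (hconv : Convex ℝ (chartMap f₀ '' Ω))
    {x y : PSp d} (hx : x ∈ Ω) (hy : y ∈ Ω) :
    crossSet Ω x y = {ρ | ∃ f ∈ posDual (chartMap f₀ '' Ω), ∃ g ∈ posDual (chartMap f₀ '' Ω),
      ρ = crossRatio f g (chartMap f₀ x) (chartMap f₀ y)} := by
  have hrep : ∀ f g : (Fin d → ℝ) →ₗ[ℝ] ℝ, f x.rep * g y.rep / (f y.rep * g x.rep) =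
      crossRatio f g (chartMap f₀ x) (chartMap f₀ y) := fun f g => by
    rw [← crossRatio_smul_smul f g _ _ (hch x hx) (hch y hy), ← rep_eq_smul_chartMap (hch x hx),
      ← rep_eq_smul_chartMap (hch y hy), crossRatio]
  have hne_iff : ∀ f : (Fin d → ℝ) →ₗ[ℝ] ℝ,
      (∀ z ∈ Ω, f z.rep ≠ 0) ↔ ∀ v ∈ chartMap f₀ '' Ω, f v ≠ 0 := fun f => by
    rw [forall_mem_image]
    refine forall₂_congr fun z hz => ?_
    rw [apply_rep_eq_mul (hch z hz), mul_ne_zero_iff, and_iff_right (hch z hz)]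
  ext ρ
  constructor
  · rintro ⟨f, g, hf, hg, rfl⟩
    obtain ⟨f', hf', ε, hε, rfl⟩ := hconv.exists_mem_posDual_eq_smul ((hne_iff f).1 hf)
    obtain ⟨g', hg', δ, hδ, rfl⟩ := hconv.exists_mem_posDual_eq_smul ((hne_iff g).1 hg)
    exact ⟨f', hf', g', hg', by rw [hrep, smul_crossRatio_smul _ _ _ _ hε hδ]⟩
  · rintro ⟨f, hf, g, hg, rfl⟩
    exact ⟨f, g, (hne_iff f).2 fun v hv => (hf v hv).ne', (hne_iff g).2 fun v hv => (hg v hv).ne',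
      (hrep f g).symm⟩

/-- Openness of `Ω` lets the line from `x` through `y` continue in `Ω` slightly beyond `y`. -/
lemma exists_forall_posDual_le_mul (hΩo : IsOpen Ω) (hch : ∀ z ∈ Ω, f₀ z.rep ≠ 0)
    {x y : PSp d} (hx : x ∈ Ω) (hy : y ∈ Ω) :
    ∃ B : ℝ, ∀ f ∈ posDual (chartMap f₀ '' Ω), f (chartMap f₀ x) ≤ B * f (chartMap f₀ y) := by
  set line : ℝ → Fin d → ℝ := fun s => chartMap f₀ y + s • (chartMap f₀ y - chartMap f₀ x)
  have hline : Continuous line := by fun_prop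
  have h0 : line 0 ∈ {v | ∃ hv : v ≠ 0, Projectivization.mk ℝ v hv ∈ Ω} := by
    have hy0 := chartMap_ne_zero (hch y hy)
    exact ⟨by simpa [line] using hy0, by simpa [line, mk_chartMap hy0] using hy⟩
  obtain ⟨s, ⟨hne, hmem⟩, hs⟩ :=
    (((hline.tendsto 0).eventually ((isOpen_setOf_mk_mem hΩo).mem_nhds h0)).filter_mono
      nhdsWithin_le_nhds |>.and (self_mem_nhdsWithin (s := Ioi 0))).exists
  have hline_s : f₀ (line s) = 1 := by
    simp [line, apply_chartMap_self (hch x hx), apply_chartMap_self (hch y hy)]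
  refine ⟨(1 + s) / s, fun f hf => ?_⟩
  have hpos : 0 < f (line s) := by
    simpa [chartMap_mk hne hline_s] using hf _ (mem_image_of_mem _ hmem)
  simp only [line, map_add, map_smul, map_sub, smul_eq_mul] at hpos
  rw [div_mul_eq_mul_div, le_div_iff₀ hs]
  linarith

lemma bddAbove_crossSet (hΩo : IsOpen Ω) (hch : ∀ z ∈ Ω, f₀ z.rep ≠ 0)
    (hconv : Convex ℝ (chartMap f₀ '' Ω)) {x y : PSp d} (hx : x ∈ Ω) (hy : y ∈ Ω) :
    BddAbove (crossSet Ω x y) := by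
  obtain ⟨B₁, h₁⟩ := exists_forall_posDual_le_mul hΩo hch hx hy
  obtain ⟨B₂, h₂⟩ := exists_forall_posDual_le_mul hΩo hch hy hx
  refine ⟨B₁ * B₂, ?_⟩
  rw [crossSet_eq hch hconv hx hy]
  rintro _ ⟨f, hf, g, hg, rfl⟩
  have hfx := hf _ (mem_image_of_mem _ hx)
  have hfy := hf _ (mem_image_of_mem _ hy)
  have hgx := hg _ (mem_image_of_mem _ hx)
  have hgy := hg _ (mem_image_of_mem _ hy)
  rw [crossRatio, div_le_iff₀ (mul_pos hfy hgx)]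
  calc f (chartMap f₀ x) * g (chartMap f₀ y)
      ≤ B₁ * f (chartMap f₀ y) * (B₂ * g (chartMap f₀ x)) :=
        mul_le_mul (h₁ f hf) (h₂ g hg) hgy.le (hfx.le.trans (h₁ f hf))
    _ = B₁ * B₂ * (f (chartMap f₀ y) * g (chartMap f₀ x)) := by ring

lemma one_mem_crossSet (hch : ∀ z ∈ Ω, f₀ z.rep ≠ 0) {x y : PSp d} (hx : x ∈ Ω) (hy : y ∈ Ω) :
    (1 : ℝ) ∈ crossSet Ω x y :=
  ⟨f₀, f₀, hch, hch, by rw [mul_comm (f₀ x.rep), div_self (mul_ne_zero (hch y hy) (hch x hx))]⟩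

lemma hilbertDist_nonneg (hΩo : IsOpen Ω) (hch : ∀ z ∈ Ω, f₀ z.rep ≠ 0)
    (hconv : Convex ℝ (chartMap f₀ '' Ω)) {x y : PSp d} (hx : x ∈ Ω) (hy : y ∈ Ω) :
    0 ≤ hilbertDist Ω x y :=
  mul_nonneg one_half_pos.le <| Real.log_nonneg <|
    le_csSup (bddAbove_crossSet hΩo hch hconv hx hy) (one_mem_crossSet hch hx hy)

lemma hilbertDist_le_of_forall_crossSet_le (hch : ∀ z ∈ Ω, f₀ z.rep ≠ 0) {x y : PSp d}
    (hx : x ∈ Ω) (hy : y ∈ Ω) {R : ℝ} (h : ∀ ρ ∈ crossSet Ω x y, ρ ≤ R) :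
    hilbertDist Ω x y ≤ 1 / 2 * Real.log R := by
  have h1 := one_mem_crossSet hch hx hy
  refine mul_le_mul_of_nonneg_left (Real.log_le_log ?_ (csSup_le ⟨1, h1⟩ h)) one_half_pos.le
  exact one_pos.trans_le (le_csSup ⟨R, h⟩ h1)

lemma hilbertDistToSet_lt_iff (hΩo : IsOpen Ω) (hch : ∀ z ∈ Ω, f₀ z.rep ≠ 0)
    (hconv : Convex ℝ (chartMap f₀ '' Ω)) {x : PSp d} (hx : x ∈ Ω) {D : Set (PSp d)}
    (hD : D.Nonempty) (hDΩ : D ⊆ Ω) {r : ℝ} :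
    hilbertDistToSet Ω x D < r ↔ ∃ y ∈ D, hilbertDist Ω x y < r := by
  obtain ⟨y₀, hy₀⟩ := hD
  have hne : {s | ∃ y ∈ D, s = hilbertDist Ω x y}.Nonempty := ⟨_, y₀, hy₀, rfl⟩
  have hbdd : BddBelow {s | ∃ y ∈ D, s = hilbertDist Ω x y} := ⟨0, by
    rintro _ ⟨y, hy, rfl⟩
    exact hilbertDist_nonneg hΩo hch hconv hx (hDΩ hy)⟩
  rw [hilbertDistToSet, csInf_lt_iff hbdd hne]
  constructor
  · rintro ⟨_, ⟨y, hy, rfl⟩, h⟩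
    exact ⟨y, hy, h⟩
  · rintro ⟨y, hy, h⟩
    exact ⟨_, ⟨y, hy, rfl⟩, h⟩

lemma exists_dualSandwich_of_sSup_crossSet_le (hΩo : IsOpen Ω) (hch : ∀ z ∈ Ω, f₀ z.rep ≠ 0)
    (hconv : Convex ℝ (chartMap f₀ '' Ω)) {x y : PSp d} (hx : x ∈ Ω) (hy : y ∈ Ω) {R : ℝ}
    (hR : sSup (crossSet Ω x y) ≤ R) : ∃ c : ℝ, 0 < c ∧
      DualSandwich (posDual (chartMap f₀ '' Ω)) R (chartMap f₀ x) (c • chartMap f₀ y) := by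
  have hbdd := bddAbove_crossSet hΩo hch hconv hx hy
  refine exists_dualSandwich ⟨f₀, mem_posDual_self hch⟩ (fun f hf => hf _ (mem_image_of_mem _ hx))
    (fun f hf => hf _ (mem_image_of_mem _ hy))
    (one_pos.trans_le ((le_csSup hbdd (one_mem_crossSet hch hx hy)).trans hR))
    fun f hf g hg => (le_csSup hbdd ?_).trans hR
  rw [crossSet_eq hch hconv hx hy]
  exact ⟨f, hf, g, hg, rfl⟩

lemma exists_hilbertDist_le_max (hΩo : IsOpen Ω) (hch : ∀ z ∈ Ω, f₀ z.rep ≠ 0)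
    (hconv : Convex ℝ (chartMap f₀ '' Ω)) {D : Set (PSp d)} (hDΩ : D ⊆ Ω)
    (hD : Convex ℝ (chartMap f₀ '' D)) {x z w y₁ y₂ : PSp d} (hx : x ∈ Ω) (hz : z ∈ Ω)
    (hw : w ∈ Ω) (hy₁ : y₁ ∈ D) (hy₂ : y₂ ∈ D) {a b : ℝ} (ha : 0 ≤ a) (hb : 0 ≤ b)
    (hab : a + b = 1) (hw_eq : a • chartMap f₀ x + b • chartMap f₀ z = chartMap f₀ w) :
    ∃ y ∈ D, hilbertDist Ω w y ≤ max (hilbertDist Ω x y₁) (hilbertDist Ω z y₂) := by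
  set R := max (sSup (crossSet Ω x y₁)) (sSup (crossSet Ω z y₂))
  obtain ⟨c₁, hc₁, h₁⟩ := exists_dualSandwich_of_sSup_crossSet_le hΩo hch hconv hx (hDΩ hy₁)
    (le_max_left _ _ : _ ≤ R)
  obtain ⟨c₂, hc₂, h₂⟩ := exists_dualSandwich_of_sSup_crossSet_le hΩo hch hconv hz (hDΩ hy₂)
    (le_max_right _ _ : _ ≤ R)
  set σ := a * c₁ + b * c₂
  have hσ : 0 < σ := convex_Ioi (0 : ℝ) hc₁ hc₂ ha hb hab
  obtain ⟨y, hy, hy_eq⟩ := hD (mem_image_of_mem _ hy₁) (mem_image_of_mem _ hy₂)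
    (div_nonneg (mul_nonneg ha hc₁.le) hσ.le) (div_nonneg (mul_nonneg hb hc₂.le) hσ.le)
    (by rw [← add_div, div_self hσ.ne'])
  have hsandwich : DualSandwich (posDual (chartMap f₀ '' Ω)) R (chartMap f₀ w)
      (σ • chartMap f₀ y) := by
    convert h₁.smul_add_smul h₂ ha hb using 1
    · exact hw_eq.symm
    · rw [hy_eq, smul_add, smul_smul, smul_smul, mul_div_cancel₀ _ hσ.ne',
        mul_div_cancel₀ _ hσ.ne', smul_smul, smul_smul]
  have hcross : ∀ ρ ∈ crossSet Ω w y, ρ ≤ R := by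
    rw [crossSet_eq hch hconv hw (hDΩ hy)]
    rintro _ ⟨f, hf, g, hg, rfl⟩
    exact hsandwich.crossRatio_le hσ (fun f hf => hf _ (mem_image_of_mem _ (hDΩ hy))) hf hg
  refine ⟨y, hy, (hilbertDist_le_of_forall_crossSet_le hch hw (hDΩ hy) hcross).trans ?_⟩
  rcases max_choice (sSup (crossSet Ω x y₁)) (sSup (crossSet Ω z y₂)) with h | h
  · exact (congrArg (1 / 2 * Real.log ·) h).trans_le (le_max_left _ _)
  · exact (congrArg (1 / 2 * Real.log ·) h).trans_le (le_max_right _ _)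

end HilbertMetric

theorem neighborhood_of_convex_is_convex_general {d : ℕ} (Ω 𝒟 : Set (PSp d))
    (hΩ : IsProperlyConvexDomain Ω)
    (h𝒟ne : 𝒟.Nonempty) (h𝒟Ω : 𝒟 ⊆ Ω) (h𝒟conv : IsConvexSet 𝒟) (r : ℝ) :
    IsConvexSet {x ∈ Ω | hilbertDistToSet Ω x 𝒟 < r} ∧
    {x ∈ Ω | hilbertDistToSet Ω x 𝒟 < r} ⊆ Ω := by
  obtain ⟨hΩo, -, f₀, hch, hconv, -⟩ := hΩ
  have h𝒟conv' := h𝒟conv.convex_image_chartMap fun y hy => hch y (h𝒟Ω hy)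
  have hlt_iff : ∀ x ∈ Ω, hilbertDistToSet Ω x 𝒟 < r ↔ ∃ y ∈ 𝒟, hilbertDist Ω x y < r :=
    fun x hx => hilbertDistToSet_lt_iff hΩo hch hconv hx h𝒟ne h𝒟Ω
  refine ⟨⟨f₀, fun x hx => hch x hx.1, ?_⟩, fun x hx => hx.1⟩
  rintro _ ⟨x, ⟨hx, hxr⟩, rfl⟩ _ ⟨z, ⟨hz, hzr⟩, rfl⟩ a b ha hb hab
  obtain ⟨y₁, hy₁, h₁⟩ := (hlt_iff x hx).1 hxr
  obtain ⟨y₂, hy₂, h₂⟩ := (hlt_iff z hz).1 hzr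
  obtain ⟨w, hw, hw_eq⟩ := hconv (mem_image_of_mem _ hx) (mem_image_of_mem _ hz) ha hb hab
  obtain ⟨y, hy, hwy⟩ := exists_hilbertDist_le_max hΩo hch hconv h𝒟Ω h𝒟conv' hx hz hw hy₁ hy₂
    ha hb hab hw_eq.symm
  exact ⟨w, ⟨hw, (hlt_iff w hw).2 ⟨y, hy, hwy.trans_lt (max_lt h₁ h₂)⟩⟩, hw_eq⟩

/-- **Proposition 4.3**: metric neighborhoods (for the Hilbert metric) of a non-empty
closed convex subset of a properly convex domain are convex. -/
theorem neighborhood_of_convex_is_convex {d : ℕ} (Ω 𝒟 : Set (PSp d))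
    (hΩ : IsProperlyConvexDomain Ω)
    (h𝒟ne : 𝒟.Nonempty) (h𝒟Ω : 𝒟 ⊆ Ω) (h𝒟conv : IsConvexSet 𝒟)
    (h𝒟cl : closure 𝒟 ∩ Ω ⊆ 𝒟) (r : ℝ) (hr : 0 ≤ r) :
    IsConvexSet {x ∈ Ω | hilbertDistToSet Ω x 𝒟 < r} ∧
    {x ∈ Ω | hilbertDistToSet Ω x 𝒟 < r} ⊆ Ω :=
  neighborhood_of_convex_is_convex_general Ω 𝒟 hΩ h𝒟ne h𝒟Ω h𝒟conv r

end CCProj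
end

section
/- Suppose Ω ⊂ ℙ(ℝ^d) is a properly convex domain, p_0 ∈ Ω, and (g_n) is a sequence in Aut(Ω) such that: (1) g_n(p_0) → x ∈ ∂Ω; (2) g_n^{-1}(p_0) → y ∈ ∂Ω; and (3) there exist lifts ḡ_n ∈ GL_d(ℝ) of g_n with ‖ḡ_n‖ = 1 and a nonzero endomorphism T̄ ∈ End(ℝ^d) with ḡ_n → T̄ (i.e. g_n → [T̄] in ℙ(End(ℝ^d))). Then image(T̄) ⊆ span F_Ω(x), ℙ(ker T̄) ∩ Ω = ∅, and y ∈ ℙ(ker T̄). -/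
open scoped LinearAlgebra.Projectivization Pointwise
open Projectivization Matrix

/-!
Lift everything to `ℝ^d`. The affine cone over `Ω` is `C ∪ -C` for an open convex cone `C`
whose closure is sharp. Each lift `ḡ_n` maps the connected set `C` into `C` or into `-C`, so
`σ T̄` maps `C` into `cl C` for a fixed sign `σ`; by sharpness `T̄` cannot vanish at a point of
`C`, since it would then vanish on an open set. So `T̄` sends `C` into the cone over `cl Ω`, and
`T̄ p̄₀` lies over `x`. For `w ∈ C`, the segment from `p̄₀` to `w`, extended a little inside `C`,
is mapped onto a segment of `cl Ω` through `x` and `[T̄ w]`; hence `[T̄ w] ∈ F_Ω(x)` and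
`image T̄ = T̄ (span C) ⊆ span F_Ω(x)`. A supporting hyperplane of `C` at a lift of `x` contains
`span F_Ω(x)` and misses `Ω`. Finally, if `T̄ ȳ ≠ 0` then `p₀ = g_n (g_n⁻¹ p₀) → [T̄ ȳ]`, a point
of `ℙ(image T̄)`, which misses `Ω`.
-/

section OpenCones

variable {E : Type*} [NormedAddCommGroup E] [NormedSpace ℝ E]

lemma IsOpen.exists_pos_add_smul_mem_and_sub_smul_mem {U : Set E} (hU : IsOpen U) {v : E}
    (hv : v ∈ U) (u : E) : ∃ t : ℝ, 0 < t ∧ v + t • u ∈ U ∧ v - t • u ∈ U := by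
  have h : ∀ w : E, ∀ᶠ t in nhds (0 : ℝ), v + t • w ∈ U := fun w =>
    ((continuous_const.add (continuous_id.smul continuous_const)).tendsto' (0 : ℝ) v
      (by simp)).eventually (hU.mem_nhds hv)
  obtain ⟨t, ht, ht0⟩ := ((((h u).and (h (-u))).filter_mono nhdsWithin_le_nhds).and
    (self_mem_nhdsWithin (s := Set.Ioi 0))).exists
  exact ⟨t, ht0, ht.1, by simpa [sub_eq_add_neg] using ht.2⟩

lemma IsOpen.span_eq_top {U : Set E} (hU : IsOpen U) (hne : U.Nonempty) :
    Submodule.span ℝ U = ⊤ := by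
  obtain ⟨v, hv⟩ := hne
  refine Submodule.eq_top_iff'.2 fun u => ?_
  obtain ⟨t, ht, hvu, -⟩ := hU.exists_pos_add_smul_mem_and_sub_smul_mem hv u
  have : t • u ∈ Submodule.span ℝ U := by
    simpa using Submodule.sub_mem _ (Submodule.subset_span hvu) (Submodule.subset_span hv)
  simpa [smul_smul, inv_mul_cancel₀ ht.ne'] using Submodule.smul_mem _ t⁻¹ this

lemma ConvexCone.exists_dual_eq_zero_and_neg (C : ConvexCone ℝ E) (hC : IsOpen (C : Set E))
    {x : E} (hx : x ∈ closure (C : Set E)) (hxC : x ∉ C) :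
    ∃ φ : StrongDual ℝ E, φ x = 0 ∧ ∀ a ∈ C, φ a < 0 := by
  obtain ⟨φ, hφ⟩ := geometric_hahn_banach_open_point C.convex hC hxC
  -- `φ` is bounded above by `φ x` on the cone `C`, hence `φ ≤ 0` on `C` and `0 ≤ φ x`
  have hle : ∀ a ∈ C, φ a ≤ 0 := by
    intro a ha
    by_contra! hpos
    have := hφ _ (C.smul_mem (div_pos (abs_nonneg (φ x) |>.trans_lt (lt_add_one _)) hpos) ha)
    rw [map_smul, smul_eq_mul, div_mul_cancel₀ _ hpos.ne'] at this
    linarith [le_abs_self (φ x)]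
  have hx_nonpos : φ x ≤ 0 := closure_minimal hle (isClosed_le φ.continuous continuous_const) hx
  obtain ⟨a, ha⟩ : (C : Set E).Nonempty := closure_nonempty_iff.1 ⟨x, hx⟩
  have hx_nonneg : 0 ≤ φ x := by
    by_contra! hneg
    have hφa : φ a < 0 := (hφ a ha).trans hneg
    have := hφ _ (C.smul_mem (div_pos_of_neg_of_neg hneg (by linarith : 2 * φ a < 0)) ha)
    have h2 : φ x / (2 * φ a) * φ a = φ x / 2 := by field_simp [hφa.ne]
    rw [map_smul, smul_eq_mul, h2] at this
    linarith
  have hφx : φ x = 0 := le_antisymm hx_nonpos hx_nonneg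
  exact ⟨φ, hφx, fun a ha => hφx ▸ hφ a ha⟩

lemma ConvexCone.mapsTo_or_mapsTo_neg {C : ConvexCone ℝ E} (hC : IsOpen (C : Set E))
    (hdisj : Disjoint (C : Set E) (-C)) {L : E →ₗ[ℝ] E} (hL : Set.MapsTo L C (C ∪ -C)) :
    Set.MapsTo L C C ∨ Set.MapsTo (-L) C C := by
  rcases (C.convex.linear_image L).isPreconnected.subset_or_subset hC hC.neg hdisj
    hL.image_subset with h | h
  · exact Or.inl fun c hc => h ⟨c, hc, rfl⟩
  · exact Or.inr fun c hc => h ⟨c, hc, rfl⟩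

lemma LinearMap.eq_zero_of_mapsTo_closure {C : Set E} (hC : IsOpen C)
    (hpointed : ∀ w ∈ closure C, -w ∈ closure C → w = 0) {L : E →ₗ[ℝ] E}
    (hL : Set.MapsTo L C (closure C)) {v : E} (hv : v ∈ C) (hLv : L v = 0) : L = 0 := by
  ext u
  obtain ⟨t, ht, h₁, h₂⟩ := hC.exists_pos_add_smul_mem_and_sub_smul_mem hv u
  have := hpointed (t • L u) (by simpa [hLv] using hL h₁) (by simpa [hLv] using hL h₂)
  exact (smul_eq_zero.1 this).resolve_left ht.ne'

end OpenCones

lemma Filter.Tendsto.matrix_mulVec {m ι : Type*} [Fintype m] {l : Filter ι}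
    {M : ι → Matrix m m ℝ} {T : Matrix m m ℝ} {v : ι → m → ℝ} {w : m → ℝ}
    (hM : Filter.Tendsto M l (nhds T)) (hv : Filter.Tendsto v l (nhds w)) :
    Filter.Tendsto (fun i => M i *ᵥ v i) l (nhds (T *ᵥ w)) :=
  ((continuous_fst.matrix_mulVec continuous_snd).tendsto (T, w)).comp (hM.prodMk_nhds hv)

lemma exists_smul_mapsTo_closure {m ι : Type*} [Fintype m] {l : Filter ι} [l.NeBot]
    {C : Set (m → ℝ)} {M : ι → Matrix m m ℝ} {T : Matrix m m ℝ}
    (hM : Filter.Tendsto M l (nhds T))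
    (hMC : ∀ i, Set.MapsTo (M i).mulVecLin C C ∨ Set.MapsTo (-(M i).mulVecLin) C C) :
    ∃ σ : ℝ, σ ≠ 0 ∧ Set.MapsTo (σ • T.mulVecLin) C (closure C) := by
  rcases Filter.frequently_or_distrib.1 (Filter.Eventually.of_forall (f := l) hMC).frequently
    with h | h
  · refine ⟨1, one_ne_zero, fun c hc => ?_⟩
    simpa using mem_closure_of_frequently_of_tendsto (h.mono fun i hi => hi hc)
      (hM.matrix_mulVec tendsto_const_nhds)
  · refine ⟨-1, by norm_num, fun c hc => ?_⟩
    simpa using mem_closure_of_frequently_of_tendsto (h.mono fun i hi => hi hc)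
      (hM.matrix_mulVec tendsto_const_nhds).neg

lemma eq_zero_of_forall_abs_lt_mul_nonpos {a b ε : ℝ} (hε : 0 < ε)
    (h : ∀ t, |t| < ε → t * (a + t * b) ≤ 0) : a = 0 := by
  have hmax : IsLocalMax (fun t => t * (a + t * b)) 0 :=
    Filter.mem_of_superset (Metric.ball_mem_nhds 0 hε) fun t ht => by
      simpa using h t (by simpa using ht)
  have hderiv : HasDerivAt (fun t => t * (a + t * b)) a 0 := by
    simpa using (hasDerivAt_id' (0 : ℝ)).fun_mul (((hasDerivAt_id' 0).mul_const b).const_add a)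
  exact hmax.hasDerivAt_eq_zero hderiv

namespace CCProj

section AffineCone

variable {d : ℕ}

lemma mk_smul {c : ℝ} (hc : c ≠ 0) {v : Fin d → ℝ} (hv : v ≠ 0) :
    mk ℝ (c • v) (smul_ne_zero hc hv) = mk ℝ v hv :=
  (mk_eq_mk_iff' ℝ _ _ _ _).2 ⟨c, rfl⟩

lemma mk_smul_rep (z : PSp d) {c : ℝ} (h : c • z.rep ≠ 0) : mk ℝ (c • z.rep) h = z := by
  rw [mk_smul (left_ne_zero_of_smul h) z.rep_nonzero, mk_rep]

lemma exists_rep_eq_smul {v : Fin d → ℝ} (hv : v ≠ 0) :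
    ∃ c : ℝ, c ≠ 0 ∧ (mk ℝ v hv).rep = c • v := by
  obtain ⟨a, ha⟩ := exists_smul_eq_mk_rep ℝ v hv
  exact ⟨a, a.ne_zero, ha.symm⟩

lemma mk_mem_Pb_iff {W : Submodule ℝ (Fin d → ℝ)} {v : Fin d → ℝ} (hv : v ≠ 0) :
    mk ℝ v hv ∈ Pb W ↔ v ∈ W := by
  obtain ⟨c, hc, hrep⟩ := exists_rep_eq_smul hv
  rw [Pb, Set.mem_ofPred_eq, hrep, Submodule.smul_mem_iff W hc]

lemma GL_mulVec_ne_zero (G : GL (Fin d) ℝ) {v : Fin d → ℝ} (hv : v ≠ 0) :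
    (G : Matrix (Fin d) (Fin d) ℝ) *ᵥ v ≠ 0 :=
  (mulVec_injective_iff_isUnit.2 G.isUnit).ne_iff' (mulVec_zero _) |>.2 hv

lemma GL_smul_mk (G : GL (Fin d) ℝ) {v : Fin d → ℝ} (hv : v ≠ 0) :
    (G : PGL d) • mk ℝ v hv =
      mk ℝ ((G : Matrix (Fin d) (Fin d) ℝ) *ᵥ v) (GL_mulVec_ne_zero G hv) := by
  change projPerm (glEquivHom d G) (mk ℝ v hv) = _
  simp [projPerm, Projectivization.map_mk, glEquivHom, Matrix.GeneralLinearGroup.toLin]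

def affineCone (A : Set (PSp d)) : Set (Fin d → ℝ) := {v | ∃ h : v ≠ 0, mk ℝ v h ∈ A}

variable {A : Set (PSp d)}

lemma rep_mem_affineCone {z : PSp d} (hz : z ∈ A) : z.rep ∈ affineCone A :=
  ⟨z.rep_nonzero, by rwa [mk_rep]⟩

lemma smul_mem_affineCone {c : ℝ} (hc : c ≠ 0) {v : Fin d → ℝ} (hv : v ∈ affineCone A) :
    c • v ∈ affineCone A :=
  ⟨smul_ne_zero hc hv.1, by rw [mk_smul hc hv.1]; exact hv.2⟩

lemma smul_mem_affineCone_iff {c : ℝ} (hc : c ≠ 0) {v : Fin d → ℝ} :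
    c • v ∈ affineCone A ↔ v ∈ affineCone A :=
  ⟨fun h => by simpa [smul_smul, inv_mul_cancel₀ hc] using smul_mem_affineCone (inv_ne_zero hc) h,
    smul_mem_affineCone hc⟩

lemma neg_mem_affineCone_iff {v : Fin d → ℝ} : -v ∈ affineCone A ↔ v ∈ affineCone A := by
  simpa using smul_mem_affineCone_iff (A := A) (neg_ne_zero.2 one_ne_zero) (v := v)

lemma affineCone_subset_projSpan : affineCone A ⊆ projSpan A := by
  rintro v ⟨hv, hvA⟩
  obtain ⟨c, hc, hrep⟩ := exists_rep_eq_smul hv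
  have : c • v ∈ projSpan A := Submodule.subset_span ⟨_, hvA, hrep.symm⟩
  simpa [smul_smul, inv_mul_cancel₀ hc] using (projSpan A).smul_mem c⁻¹ this

lemma GL_mulVec_mem_affineCone {G : GL (Fin d) ℝ} (hG : (G : PGL d) ∈ aut A) {v : Fin d → ℝ}
    (hv : v ∈ affineCone A) : (G : Matrix (Fin d) (Fin d) ℝ) *ᵥ v ∈ affineCone A := by
  refine ⟨GL_mulVec_ne_zero G hv.1, ?_⟩
  rw [← GL_smul_mk G hv.1, ← MulAction.mem_stabilizer_iff.1 hG]
  exact Set.smul_mem_smul_set hv.2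

end AffineCone

section Topology

variable {d : ℕ} {A : Set (PSp d)}

lemma continuous_mk' : Continuous (mk' ℝ : {v : Fin d → ℝ // v ≠ 0} → PSp d) :=
  continuous_quotient_mk'

lemma isOpen_affineCone (hA : IsOpen A) : IsOpen (affineCone A) := by
  have : affineCone A = Subtype.val '' (mk' ℝ ⁻¹' A) := by
    ext v
    simp [affineCone, mk'_eq_mk]
  rw [this]
  exact isOpen_ne.isOpenMap_subtype_val _ (hA.preimage continuous_mk')

lemma tendsto_mk {ι : Type*} {l : Filter ι} {v : ι → Fin d → ℝ} {w : Fin d → ℝ} (hw : w ≠ 0)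
    (hv : Filter.Tendsto v l (nhds w)) {z : ι → PSp d} (hz : ∀ᶠ i in l, v i ∈ affineCone {z i}) :
    Filter.Tendsto z l (nhds (mk ℝ w hw)) := by
  classical
  let v' : ι → {v : Fin d → ℝ // v ≠ 0} := fun i => if h : v i ≠ 0 then ⟨v i, h⟩ else ⟨w, hw⟩
  have hv' : Filter.Tendsto v' l (nhds ⟨w, hw⟩) := by
    refine tendsto_subtype_rng.2 (hv.congr' ?_)
    filter_upwards [hz] with i hi
    simp [v', hi.1]
  refine (continuous_mk'.tendsto _ |>.comp hv').congr' ?_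
  filter_upwards [hz] with i hi
  obtain ⟨h, hzi⟩ := hi
  simp [v', h, ← Set.eq_of_mem_singleton hzi, mk'_eq_mk]

/-- The orthogonal projection onto the line `z`: a continuous injection of `ℙ(ℝ^d)` into the
matrices, whose values at a fixed vector give continuous local lifts `ℙ(ℝ^d) → ℝ^d`. -/
noncomputable def lineProj (z : PSp d) : Matrix (Fin d) (Fin d) ℝ :=
  (z.rep ⬝ᵥ z.rep)⁻¹ • vecMulVec z.rep z.rep

lemma lineProj_mulVec (z : PSp d) (v : Fin d → ℝ) :
    lineProj z *ᵥ v = ((z.rep ⬝ᵥ z.rep)⁻¹ * (z.rep ⬝ᵥ v)) • z.rep := by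
  rw [lineProj, smul_mulVec, vecMulVec_mulVec, op_smul_eq_smul, smul_smul]

lemma lineProj_mulVec_rep (z : PSp d) : lineProj z *ᵥ z.rep = z.rep := by
  rw [lineProj_mulVec, inv_mul_cancel₀ (dotProduct_self_eq_zero.not.2 z.rep_nonzero), one_smul]

lemma mk_lineProj_mulVec (z : PSp d) {v : Fin d → ℝ} (h : lineProj z *ᵥ v ≠ 0) :
    mk ℝ (lineProj z *ᵥ v) h = z := by
  simp only [lineProj_mulVec] at h ⊢
  exact mk_smul_rep z h

lemma lineProj_mk {v : Fin d → ℝ} (hv : v ≠ 0) :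
    lineProj (mk ℝ v hv) = (v ⬝ᵥ v)⁻¹ • vecMulVec v v := by
  obtain ⟨c, hc, hrep⟩ := exists_rep_eq_smul hv
  have : v ⬝ᵥ v ≠ 0 := dotProduct_self_eq_zero.not.2 hv
  rw [lineProj, hrep, smul_vecMulVec, vecMulVec_smul, dotProduct_smul, smul_dotProduct, smul_smul,
    smul_smul]
  congr 1
  simp only [smul_eq_mul]
  field_simp

lemma continuous_lineProj : Continuous (lineProj (d := d)) := by
  refine isQuotientMap_quotient_mk'.continuous_iff.2 ?_
  change Continuous (lineProj ∘ mk' ℝ)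
  rw [show lineProj ∘ mk' ℝ = fun p : {v : Fin d → ℝ // v ≠ 0} =>
      (p.1 ⬝ᵥ p.1)⁻¹ • vecMulVec p.1 p.1 from funext fun p => lineProj_mk p.2]
  have hn : Continuous fun p : {v : Fin d → ℝ // v ≠ 0} => p.1 ⬝ᵥ p.1 := by fun_prop
  exact (hn.inv₀ fun p => dotProduct_self_eq_zero.not.2 p.2).smul (by fun_prop)

lemma lineProj_injective : Function.Injective (lineProj (d := d)) := by
  intro z₁ z₂ h
  have h₂ := lineProj_mulVec_rep z₂
  rw [← h] at h₂
  rw [← mk_lineProj_mulVec z₁ (h₂ ▸ z₂.rep_nonzero)]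
  simp only [h₂, mk_rep]

instance : T2Space (PSp d) := .of_injective_continuous lineProj_injective continuous_lineProj

lemma tendsto_GL_smul {ι : Type*} {l : Filter ι} {G : ι → GL (Fin d) ℝ}
    {T : Matrix (Fin d) (Fin d) ℝ}
    (hG : Filter.Tendsto (fun i => (G i : Matrix (Fin d) (Fin d) ℝ)) l (nhds T))
    {z : ι → PSp d} {y : PSp d} (hz : Filter.Tendsto z l (nhds y)) (hTy : T *ᵥ y.rep ≠ 0) :
    Filter.Tendsto (fun i => (G i : PGL d) • z i) l (nhds (mk ℝ (T *ᵥ y.rep) hTy)) := by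
  have hw : Filter.Tendsto (fun i => lineProj (z i) *ᵥ y.rep) l (nhds y.rep) := by
    simpa [lineProj_mulVec_rep] using
      ((continuous_lineProj.tendsto y).comp hz).matrix_mulVec (tendsto_const_nhds (x := y.rep))
  refine tendsto_mk hTy (hG.matrix_mulVec hw) ?_
  filter_upwards [hw.eventually_ne y.rep_nonzero] with i hi
  exact ⟨GL_mulVec_ne_zero _ hi, by rw [← GL_smul_mk _ hi, mk_lineProj_mulVec]; rfl⟩

lemma smul_mem_closure_affineCone {c : ℝ} (hc : c ≠ 0) {v : Fin d → ℝ}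
    (hv : v ∈ closure (affineCone A)) : c • v ∈ closure (affineCone A) :=
  (Set.MapsTo.closure (fun _ => smul_mem_affineCone hc) (continuous_const_smul c)) hv

lemma isClosed_setOf_rep_mem_closure_affineCone :
    IsClosed {z : PSp d | z.rep ∈ closure (affineCone A)} := by
  have hq : Topology.IsQuotientMap (mk' ℝ : {v : Fin d → ℝ // v ≠ 0} → PSp d) :=
    isQuotientMap_quotient_mk'
  rw [← hq.isClosed_preimage]
  change IsClosed {p : {v : Fin d → ℝ // v ≠ 0} | (mk ℝ p.1 p.2).rep ∈ closure (affineCone A)}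
  have : {p : {v : Fin d → ℝ // v ≠ 0} | (mk ℝ p.1 p.2).rep ∈ closure (affineCone A)} =
      Subtype.val ⁻¹' closure (affineCone A) := by
    ext ⟨v, hv⟩
    obtain ⟨c, hc, hrep⟩ := exists_rep_eq_smul hv
    simp only [Set.mem_ofPred_eq, Set.mem_preimage, hrep]
    exact ⟨fun h => by simpa [smul_smul, inv_mul_cancel₀ hc] using
      smul_mem_closure_affineCone (inv_ne_zero hc) h, smul_mem_closure_affineCone hc⟩
  rw [this]
  exact isClosed_closure.preimage continuous_subtype_val

lemma affineCone_closure : affineCone (closure A) = closure (affineCone A) \ {0} := by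
  ext v
  constructor
  · rintro ⟨hv, hvA⟩
    have hsub : closure A ⊆ {z : PSp d | z.rep ∈ closure (affineCone A)} :=
      closure_minimal (fun z hz => subset_closure (rep_mem_affineCone hz))
        isClosed_setOf_rep_mem_closure_affineCone
    have : (mk ℝ v hv).rep ∈ closure (affineCone A) := hsub hvA
    obtain ⟨c, hc, hrep⟩ := exists_rep_eq_smul hv
    rw [hrep] at this
    refine ⟨by simpa [smul_smul, inv_mul_cancel₀ hc] using
      smul_mem_closure_affineCone (inv_ne_zero hc) this, hv⟩
  · rintro ⟨hv, hv0 : v ≠ 0⟩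
    have : (⟨v, hv0⟩ : {v : Fin d → ℝ // v ≠ 0}) ∈ closure (Subtype.val ⁻¹' affineCone A) := by
      rwa [closure_subtype,
        Set.image_preimage_eq_of_subset fun u hu => ⟨⟨u, hu.1⟩, rfl⟩]
    exact ⟨hv0, map_mem_closure continuous_mk' this fun p hp => hp.2⟩

end Topology

section ChartCone

variable {d : ℕ} {f : (Fin d → ℝ) →ₗ[ℝ] ℝ} {Ω : Set (PSp d)}

lemma chartMap_mk_s11 {v : Fin d → ℝ} (hv : v ≠ 0) (hfv : f v ≠ 0) :
    chartMap f (mk ℝ v hv) = (f v)⁻¹ • v := by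
  obtain ⟨c, hc, hrep⟩ := exists_rep_eq_smul hv
  rw [chartMap, hrep, map_smul, smul_eq_mul, smul_smul]
  congr 1
  field_simp

lemma chartMap_neg (z : PSp d) : chartMap (-f) z = -chartMap f z := by
  simp [chartMap, inv_neg, neg_smul]

lemma apply_ne_zero_of_mem_affineCone (hfΩ : ∀ z ∈ Ω, f z.rep ≠ 0) {w : Fin d → ℝ}
    (hw : w ∈ affineCone Ω) : f w ≠ 0 := by
  obtain ⟨c, hc, hrep⟩ := exists_rep_eq_smul hw.1
  have := hfΩ _ hw.2
  rw [hrep, map_smul, smul_eq_mul] at this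
  exact right_ne_zero_of_mul this

lemma coe_hull_chartMap_image (hfΩ : ∀ z ∈ Ω, f z.rep ≠ 0) (hconv : Convex ℝ (chartMap f '' Ω)) :
    (ConvexCone.hull ℝ (chartMap f '' Ω) : Set (Fin d → ℝ)) = {w | 0 < f w} ∩ affineCone Ω := by
  ext w
  rw [SetLike.mem_coe, ConvexCone.mem_hull_of_convex hconv]
  constructor
  · rintro ⟨r, hr, _, ⟨z, hz, rfl⟩, rfl⟩
    have hfz := hfΩ z hz
    refine ⟨by simp [chartMap, map_smul, hfz, hr], ?_⟩
    exact smul_mem_affineCone hr.ne' (smul_mem_affineCone (inv_ne_zero hfz) (rep_mem_affineCone hz))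
  · rintro ⟨hfw : 0 < f w, hw⟩
    refine ⟨f w, hfw, _, ⟨_, hw.2, chartMap_mk_s11 hw.1 hfw.ne'⟩, ?_⟩
    simp [smul_smul, mul_inv_cancel₀ hfw.ne']

lemma IsProperlyConvexDomain.exists_convexCone (hΩ : IsProperlyConvexDomain Ω) {z : PSp d}
    (hz : z ∈ Ω) :
    ∃ (C : ConvexCone ℝ (Fin d → ℝ)) (f : (Fin d → ℝ) →ₗ[ℝ] ℝ), IsOpen (C : Set (Fin d → ℝ)) ∧
      affineCone Ω = (C : Set (Fin d → ℝ)) ∪ -(C : Set (Fin d → ℝ)) ∧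
      (∀ w ∈ closure (C : Set (Fin d → ℝ)), w ≠ 0 → 0 < f w) ∧ z.rep ∈ C := by
  obtain ⟨hΩo, -, f, hfΩ, hconv, hbdd⟩ := hΩ
  have hchart_neg : chartMap (-f) '' Ω = -(chartMap f '' Ω) := by
    simp_rw [chartMap_neg, ← Set.image_neg_eq_neg, Set.image_image]
  wlog hfz : 0 < f z.rep generalizing f
  · refine this (-f) (by simpa using hfΩ) (by rw [hchart_neg]; exact hconv.neg)
      (by rw [hchart_neg]; exact hbdd.neg) ?_ ?_
    · simp_rw [chartMap_neg, neg_neg, ← Set.image_neg_eq_neg, Set.image_image, neg_neg]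
    · simpa using lt_of_le_of_ne (not_lt.1 hfz) (hfΩ z hz)
  have hC := coe_hull_chartMap_image hfΩ hconv
  obtain ⟨R, hR0, hR⟩ := hbdd.exists_pos_norm_le
  refine ⟨ConvexCone.hull ℝ (chartMap f '' Ω), f, ?_, ?_, ?_, ?_⟩
  · rw [hC]
    exact (isOpen_lt continuous_const f.continuous_of_finiteDimensional).inter
      (isOpen_affineCone hΩo)
  · ext w
    simp only [Set.mem_union, Set.mem_neg, hC, Set.mem_inter_iff, Set.mem_ofPred_eq, map_neg,
      neg_pos, neg_mem_affineCone_iff]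
    refine ⟨fun hw => ?_, by rintro (h | h) <;> exact h.2⟩
    rcases (apply_ne_zero_of_mem_affineCone hfΩ hw).lt_or_gt with h | h
    exacts [Or.inr ⟨h, hw⟩, Or.inl ⟨h, hw⟩]
  · have hCR : (ConvexCone.hull ℝ (chartMap f '' Ω) : Set (Fin d → ℝ)) ⊆
        {w | ‖w‖ ≤ R * f w} := by
      rw [hC]
      rintro w ⟨hfw : 0 < f w, hw⟩
      have := hR _ ⟨_, hw.2, chartMap_mk_s11 hw.1 hfw.ne'⟩
      rw [norm_smul, norm_inv, Real.norm_of_nonneg hfw.le, inv_mul_le_iff₀ hfw] at this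
      simpa [mul_comm] using this
    intro w hw hw0
    have := closure_minimal hCR
      (isClosed_le continuous_norm (continuous_const.mul f.continuous_of_finiteDimensional)) hw
    exact pos_of_mul_pos_right ((norm_pos_iff.2 hw0).trans_le this) hR0.le
  · rw [← SetLike.mem_coe, hC]
    exact ⟨hfz, rep_mem_affineCone hz⟩

end ChartCone
section Faces

variable {d : ℕ} {Ω : Set (PSp d)}

/-- On the line `t ↦ (a + t) • u + b • v`, the product `φ * f` of two affine functions has a
maximum `0` at `t = 0`, so its derivative `φ u * f (a • u + b • v)` there vanishes. -/
lemma apply_eq_zero_of_mul_nonpos {φ f : (Fin d → ℝ) →ₗ[ℝ] ℝ} {u v : Fin d → ℝ} {a b : ℝ}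
    (ha : 0 < a) (hb : 0 < b)
    (h : ∀ α β : ℝ, 0 < α → 0 < β → φ (α • u + β • v) * f (α • u + β • v) ≤ 0)
    (hφ : φ (a • u + b • v) = 0) (hf : f (a • u + b • v) ≠ 0) : φ u = 0 := by
  have : φ u * f (a • u + b • v) = 0 := by
    refine eq_zero_of_forall_abs_lt_mul_nonpos (b := φ u * f u) ha fun t ht => ?_
    have := h (a + t) b (by linarith [neg_abs_le t]) hb
    simp only [map_add, map_smul, smul_eq_mul] at this hφ ⊢
    linear_combination this - ((a + t) * f u + b * f v) * hφ
  exact (mul_eq_zero.1 this).resolve_right hf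

lemma face_subset_Pb_ker {x : PSp d} {φ f : (Fin d → ℝ) →ₗ[ℝ] ℝ}
    (hf : ∀ w ∈ affineCone (closure Ω), f w ≠ 0)
    (hφf : ∀ w ∈ affineCone (closure Ω), φ w * f w ≤ 0) (hx : x ∈ Pb (LinearMap.ker φ)) :
    face Ω x ⊆ Pb (LinearMap.ker φ) := by
  rintro z (rfl | ⟨-, u, v, hseg, ⟨a, b, ha, hb, hab, rfl⟩, ⟨a', b', -, -, hab', rfl⟩⟩)
  · exact hx
  have hquad : ∀ α β : ℝ, 0 < α → 0 < β → φ (α • u + β • v) * f (α • u + β • v) ≤ 0 := by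
    intro α β hα hβ
    by_cases h0 : α • u + β • v = 0
    · simp [h0]
    · exact hφf _ ⟨h0, hseg ⟨α, β, hα, hβ, h0, rfl⟩⟩
  rw [mk_mem_Pb_iff, LinearMap.mem_ker] at hx ⊢
  have hfx := hf _ ⟨hab, hseg ⟨a, b, ha, hb, hab, rfl⟩⟩
  have hu := apply_eq_zero_of_mul_nonpos ha hb hquad hx hfx
  have hv := apply_eq_zero_of_mul_nonpos hb ha
    (fun α β hα hβ => by simpa only [add_comm] using hquad β α hβ hα)
    (by rwa [add_comm]) (by rwa [add_comm])
  simp [hu, hv]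

lemma mem_affineCone_face {C : ConvexCone ℝ (Fin d → ℝ)} (hC : IsOpen (C : Set (Fin d → ℝ)))
    {L : (Fin d → ℝ) →ₗ[ℝ] (Fin d → ℝ)} (hL : Set.MapsTo L C (affineCone (closure Ω)))
    {p w : Fin d → ℝ} (hp : p ∈ C) (hw : w ∈ C) {x : PSp d} (hx : L p ∈ affineCone {x}) :
    L w ∈ affineCone (face Ω x) := by
  -- the segment from `L p` to `L w`, extended slightly beyond both ends inside `L '' C`
  obtain ⟨a, ha, hw₁, -⟩ := hC.exists_pos_add_smul_mem_and_sub_smul_mem hp (p - w)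
  obtain ⟨b, hb, hw₂, -⟩ := hC.exists_pos_add_smul_mem_and_sub_smul_mem hw (w - p)
  set w₁ := p + a • (p - w)
  set w₂ := w + b • (w - p)
  have hsum : 1 + a + b ≠ 0 := by positivity
  have hseg : ∀ α β : ℝ, 0 < α → 0 < β → α • L w₁ + β • L w₂ ∈ affineCone (closure Ω) := by
    intro α β hα hβ
    rw [← map_smul, ← map_smul, ← map_add]
    exact hL (C.add_mem (C.smul_mem hα hw₁) (C.smul_mem hβ hw₂))
  have hpx : (1 + b) • L w₁ + a • L w₂ ∈ affineCone {x} := by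
    convert smul_mem_affineCone hsum hx using 1
    simp only [w₁, w₂, ← map_smul, ← map_add]
    congr 1
    module
  have hwL : b • L w₁ + (1 + a) • L w₂ ∈ affineCone {mk ℝ (L w) (hL hw).1} := by
    convert smul_mem_affineCone hsum
      (⟨(hL hw).1, rfl⟩ : L w ∈ affineCone {mk ℝ (L w) (hL hw).1}) using 1
    simp only [w₁, w₂, ← map_smul, ← map_add]
    congr 1
    module
  refine ⟨(hL hw).1, Or.inr ⟨(hL hw).2, L w₁, L w₂, ?_, ?_, ?_⟩⟩
  · rintro _ ⟨α, β, hα, hβ, -, rfl⟩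
    exact (hseg α β hα hβ).2
  · exact ⟨1 + b, a, by positivity, ha, hpx.1, hpx.2.symm⟩
  · exact ⟨b, 1 + a, hb, by positivity, hwL.1, hwL.2.symm⟩

lemma range_le_projSpan {A : Set (PSp d)} {U : Set (Fin d → ℝ)} (hU : IsOpen U)
    (hne : U.Nonempty) {L : (Fin d → ℝ) →ₗ[ℝ] (Fin d → ℝ)} (hL : Set.MapsTo L U (affineCone A)) :
    LinearMap.range L ≤ projSpan A := by
  rw [LinearMap.range_eq_map, ← hU.span_eq_top hne, Submodule.map_span, Submodule.span_le]
  rintro _ ⟨u, hu, rfl⟩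
  exact affineCone_subset_projSpan (hL hu)

end Faces

section ConeOverDomain

variable {d : ℕ} {Ω : Set (PSp d)} {C : ConvexCone ℝ (Fin d → ℝ)} {f : (Fin d → ℝ) →ₗ[ℝ] ℝ}

lemma disjoint_neg_of_affineCone_eq (hΩC : affineCone Ω = (C : Set (Fin d → ℝ)) ∪ -C)
    (hCf : ∀ w ∈ closure (C : Set (Fin d → ℝ)), w ≠ 0 → 0 < f w) :
    Disjoint (C : Set (Fin d → ℝ)) (-C) := by
  refine Set.disjoint_left.2 fun c hc hc' => ?_
  have hc0 : c ≠ 0 := (hΩC ▸ Or.inl hc : c ∈ affineCone Ω).1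
  have h₁ := hCf c (subset_closure hc) hc0
  have h₂ := hCf (-c) (subset_closure hc') (neg_ne_zero.2 hc0)
  rw [map_neg] at h₂
  linarith

lemma eq_zero_of_mem_closure_of_neg_mem_closure
    (hCf : ∀ w ∈ closure (C : Set (Fin d → ℝ)), w ≠ 0 → 0 < f w) {w : Fin d → ℝ}
    (hw : w ∈ closure (C : Set (Fin d → ℝ))) (hw' : -w ∈ closure (C : Set (Fin d → ℝ))) :
    w = 0 := by
  by_contra hw0
  have h₁ := hCf w hw hw0
  have h₂ := hCf (-w) hw' (neg_ne_zero.2 hw0)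
  rw [map_neg] at h₂
  linarith

lemma mem_closure_or_neg_mem_closure (hΩC : affineCone Ω = (C : Set (Fin d → ℝ)) ∪ -C)
    {w : Fin d → ℝ} (hw : w ∈ affineCone (closure Ω)) :
    w ∈ closure (C : Set (Fin d → ℝ)) ∨ -w ∈ closure (C : Set (Fin d → ℝ)) := by
  rw [affineCone_closure, hΩC, closure_union, ← neg_closure] at hw
  exact hw.1

lemma mapsTo_affineCone_closure (hCo : IsOpen (C : Set (Fin d → ℝ)))
    (hΩC : affineCone Ω = (C : Set (Fin d → ℝ)) ∪ -C)
    (hCf : ∀ w ∈ closure (C : Set (Fin d → ℝ)), w ≠ 0 → 0 < f w)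
    {L : (Fin d → ℝ) →ₗ[ℝ] (Fin d → ℝ)} (hL0 : L ≠ 0) {σ : ℝ} (hσ : σ ≠ 0)
    (hL : Set.MapsTo (σ • L) C (closure C)) : Set.MapsTo L C (affineCone (closure Ω)) := by
  intro c hc
  have hLc : L c ≠ 0 := fun h => hL0 <| (smul_eq_zero.1 <|
    LinearMap.eq_zero_of_mapsTo_closure hCo (fun _ => eq_zero_of_mem_closure_of_neg_mem_closure hCf)
      hL hc (by simp [h])).resolve_left hσ
  have : σ • L c ∈ affineCone (closure Ω) := by
    rw [affineCone_closure, hΩC]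
    exact ⟨closure_mono Set.subset_union_left (hL hc), smul_ne_zero hσ hLc⟩
  exact (smul_mem_affineCone_iff hσ).1 this

lemma Pb_ker_inter_eq_empty (hΩC : affineCone Ω = (C : Set (Fin d → ℝ)) ∪ -C)
    {L : (Fin d → ℝ) →ₗ[ℝ] (Fin d → ℝ)} (hL : Set.MapsTo L C (affineCone (closure Ω))) :
    Pb (LinearMap.ker L) ∩ Ω = ∅ := by
  refine Set.eq_empty_of_forall_notMem fun z ⟨hzL, hzΩ⟩ => ?_
  rcases hΩC ▸ rep_mem_affineCone hzΩ with h | h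
  · exact (hL h).1 hzL
  · exact (hL h).1 (by rw [map_neg, neg_eq_zero]; exact hzL)

lemma apply_ne_zero_of_mem_affineCone_closure (hΩC : affineCone Ω = (C : Set (Fin d → ℝ)) ∪ -C)
    (hCf : ∀ w ∈ closure (C : Set (Fin d → ℝ)), w ≠ 0 → 0 < f w) {w : Fin d → ℝ}
    (hw : w ∈ affineCone (closure Ω)) : f w ≠ 0 := by
  rcases mem_closure_or_neg_mem_closure hΩC hw with h | h
  · exact (hCf w h hw.1).ne'
  · simpa using (hCf _ h (neg_ne_zero.2 hw.1)).ne'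

lemma mul_apply_nonpos_of_mem_affineCone_closure
    (hΩC : affineCone Ω = (C : Set (Fin d → ℝ)) ∪ -C)
    (hCf : ∀ w ∈ closure (C : Set (Fin d → ℝ)), w ≠ 0 → 0 < f w) {ψ : (Fin d → ℝ) →ₗ[ℝ] ℝ}
    (hψ : ∀ w ∈ closure (C : Set (Fin d → ℝ)), ψ w ≤ 0) {w : Fin d → ℝ}
    (hw : w ∈ affineCone (closure Ω)) : ψ w * f w ≤ 0 := by
  rcases mem_closure_or_neg_mem_closure hΩC hw with h | h
  · exact mul_nonpos_of_nonpos_of_nonneg (hψ w h) (hCf w h hw.1).le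
  · have h₁ := hψ _ h
    have h₂ := hCf _ h (neg_ne_zero.2 hw.1)
    rw [map_neg] at h₁ h₂
    nlinarith

lemma Pb_projSpan_face_inter_eq_empty (hCo : IsOpen (C : Set (Fin d → ℝ)))
    (hΩC : affineCone Ω = (C : Set (Fin d → ℝ)) ∪ -C)
    (hCf : ∀ w ∈ closure (C : Set (Fin d → ℝ)), w ≠ 0 → 0 < f w) {x : PSp d}
    (hx : x ∈ closure Ω \ Ω) : Pb (projSpan (face Ω x)) ∩ Ω = ∅ := by
  obtain ⟨x', hx'C, hx'⟩ : ∃ x' ∈ closure (C : Set (Fin d → ℝ)), x' ∈ affineCone {x} := by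
    rcases mem_closure_or_neg_mem_closure hΩC (rep_mem_affineCone hx.1) with h | h
    · exact ⟨_, h, rep_mem_affineCone rfl⟩
    · exact ⟨_, h, neg_mem_affineCone_iff.2 (rep_mem_affineCone rfl)⟩
  have hx'Ω : x' ∉ C := fun h => hx.2 (hx'.2 ▸ (hΩC ▸ Or.inl h : x' ∈ affineCone Ω).2)
  obtain ⟨φ, hφx, hφC⟩ := C.exists_dual_eq_zero_and_neg hCo hx'C hx'Ω
  have hφ : ∀ w ∈ closure (C : Set (Fin d → ℝ)), φ w ≤ 0 :=
    closure_minimal (fun w hw => (hφC w hw).le) (isClosed_le φ.continuous continuous_const)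
  have hface : face Ω x ⊆ Pb (LinearMap.ker (φ : (Fin d → ℝ) →ₗ[ℝ] ℝ)) :=
    face_subset_Pb_ker (fun _ => apply_ne_zero_of_mem_affineCone_closure hΩC hCf)
      (fun _ => mul_apply_nonpos_of_mem_affineCone_closure hΩC hCf hφ)
      (by rw [← hx'.2, mk_mem_Pb_iff]; exact hφx)
  refine Set.eq_empty_of_forall_notMem fun z ⟨hzF, hzΩ⟩ => ?_
  have hz : z.rep ∈ LinearMap.ker (φ : (Fin d → ℝ) →ₗ[ℝ] ℝ) := by
    refine Submodule.span_le.2 ?_ hzF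
    rintro _ ⟨y, hy, rfl⟩
    exact hface hy
  rcases hΩC ▸ rep_mem_affineCone hzΩ with h | h
  · exact (hφC _ h).ne hz
  · exact (hφC _ h).ne (by simpa using hz)

end ConeOverDomain

theorem dynamics_of_automorphisms_general {d : ℕ} (Ω : Set (PSp d))
    (hΩ : IsProperlyConvexDomain Ω) (p₀ : PSp d) (hp₀ : p₀ ∈ Ω)
    (g : ℕ → PGL d) (hg : ∀ n, g n ∈ aut Ω) (x y : PSp d)
    (hx : x ∈ closure Ω \ Ω)
    (hgx : Filter.Tendsto (fun n => g n • p₀) Filter.atTop (nhds x))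
    (hgy : Filter.Tendsto (fun n => (g n)⁻¹ • p₀) Filter.atTop (nhds y))
    (gbar : ℕ → GL (Fin d) ℝ) (hlift : ∀ n, (gbar n : PGL d) = g n)
    (Tbar : Matrix (Fin d) (Fin d) ℝ) (hTne : Tbar ≠ 0)
    (hconv : Filter.Tendsto (fun n => (gbar n : Matrix (Fin d) (Fin d) ℝ))
      Filter.atTop (nhds Tbar)) :
    LinearMap.range Tbar.mulVecLin ≤ projSpan (face Ω x) ∧
    Pb (LinearMap.ker Tbar.mulVecLin) ∩ Ω = ∅ ∧
    y ∈ Pb (LinearMap.ker Tbar.mulVecLin) := by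
  obtain ⟨C, f, hCo, hΩC, hCf, hp₀C⟩ := hΩ.exists_convexCone hp₀
  have hgC : ∀ n, Set.MapsTo (gbar n : Matrix (Fin d) (Fin d) ℝ).mulVecLin C (C ∪ -C) :=
    fun n c hc => hΩC ▸ GL_mulVec_mem_affineCone (hlift n ▸ hg n) (hΩC ▸ Or.inl hc)
  obtain ⟨σ, hσ, hσT⟩ := exists_smul_mapsTo_closure hconv fun n =>
    C.mapsTo_or_mapsTo_neg hCo (disjoint_neg_of_affineCone_eq hΩC hCf) (hgC n)
  have hT := mapsTo_affineCone_closure hCo hΩC hCf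
    (by simpa [Matrix.toLin'_apply'] using Matrix.toLin'.map_ne_zero_iff.2 hTne) hσ hσT
  have hx₀ : Tbar.mulVecLin p₀.rep ∈ affineCone {x} :=
    ⟨(hT hp₀C).1, tendsto_nhds_unique (tendsto_GL_smul hconv tendsto_const_nhds _)
      (by simpa only [hlift] using hgx)⟩
  have hrange : LinearMap.range Tbar.mulVecLin ≤ projSpan (face Ω x) :=
    range_le_projSpan hCo ⟨_, hp₀C⟩ fun w hw => mem_affineCone_face hCo hT hp₀C hw hx₀
  refine ⟨hrange, Pb_ker_inter_eq_empty hΩC hT, ?_⟩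
  by_contra hy
  have hTy : Tbar *ᵥ y.rep ≠ 0 := hy
  have hp₀y : p₀ = mk ℝ (Tbar *ᵥ y.rep) hTy :=
    tendsto_nhds_unique (by simp [hlift]) (tendsto_GL_smul hconv hgy hTy)
  have : p₀ ∈ Pb (projSpan (face Ω x)) ∩ Ω :=
    ⟨by rw [hp₀y, mk_mem_Pb_iff]; exact hrange ⟨y.rep, rfl⟩, hp₀⟩
  rwa [Pb_projSpan_face_inter_eq_empty hCo hΩC hCf hx] at this

/-- **Proposition 5.5** (dynamics of automorphisms): suppose `p₀ ∈ Ω`,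
`g_n ∈ Aut(Ω)`, `g_n p₀ → x ∈ ∂Ω`, `g_n⁻¹ p₀ → y ∈ ∂Ω`, and lifts `ḡ_n` of `g_n` with
Euclidean operator norm `1` converge in `End(ℝ^d)` to `T̄ ≠ 0`.  Then
`image(T̄) ⊆ span F_Ω(x)`, `ℙ(ker T̄) ∩ Ω = ∅` and `y ∈ ℙ(ker T̄)`. -/
theorem dynamics_of_automorphisms {d : ℕ} (Ω : Set (PSp d))
    (hΩ : IsProperlyConvexDomain Ω) (p₀ : PSp d) (hp₀ : p₀ ∈ Ω)
    (g : ℕ → PGL d) (hg : ∀ n, g n ∈ aut Ω) (x y : PSp d)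
    (hx : x ∈ closure Ω \ Ω) (hy : y ∈ closure Ω \ Ω)
    (hgx : Filter.Tendsto (fun n => g n • p₀) Filter.atTop (nhds x))
    (hgy : Filter.Tendsto (fun n => (g n)⁻¹ • p₀) Filter.atTop (nhds y))
    (gbar : ℕ → GL (Fin d) ℝ) (hlift : ∀ n, (gbar n : PGL d) = g n)
    (hnorm : ∀ n, eucOpNorm ((gbar n : Matrix (Fin d) (Fin d) ℝ)) = 1)
    (Tbar : Matrix (Fin d) (Fin d) ℝ) (hTne : Tbar ≠ 0)
    (hconv : Filter.Tendsto (fun n => (gbar n : Matrix (Fin d) (Fin d) ℝ))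
      Filter.atTop (nhds Tbar)) :
    LinearMap.range Tbar.mulVecLin ≤ projSpan (face Ω x) ∧
    Pb (LinearMap.ker Tbar.mulVecLin) ∩ Ω = ∅ ∧
    y ∈ Pb (LinearMap.ker Tbar.mulVecLin) :=
  dynamics_of_automorphisms_general Ω hΩ p₀ hp₀ g hg x y hx hgx hgy gbar hlift Tbar hTne hconv

end CCProj
end
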